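/- Let k ∈ {1,…,n}, Q_0 = [0,1]^n and τ ∈ (0,1). Let (m_j)_{j≥1} be positive integers with m_j ≥ 2^j and m_j dividing m_{j+1} for every j, and let (f_j)_{j≥0} be C² functions on Q_0 such that for every j ≥ 1 and every Q ∈ 𝒬(m_j): (i) | ∫_Q ( C_k(∇²f_j(x)) − C_k(∇²f_{j−1}(x)) ) dx | ≤ τ^j |Q|; and (ii) |C_k(∇²f_{j−1}(y)) − C_k(∇²f_{j−1}(x))| ≤ τ^j for all x, y ∈ Q. Assume moreover that C_k(∇²f_j(x)) → 0 as j → ∞ for almost every x ∈ Q_0. Then the weak-* limit measure μ of the measures C_k(∇²f_j) dx (which exists by (i)) is singular with respect to Lebesgue measure on Q_0. -/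

import Mathlib

open MeasureTheory Filter Topology Metric Set
open scoped RealInnerProductSpace ENNReal

noncomputable section

/-- Euclidean `n`-space. -/
abbrev Euc (n : ℕ) := EuclideanSpace ℝ (Fin n)

/-- Operator (spectral) norm of an `n × n` real matrix, i.e. the norm of the induced
linear map on Euclidean space. -/
def matOpNorm {n : ℕ} (A : Matrix (Fin n) (Fin n) ℝ) : ℝ :=
  ‖LinearMap.toContinuousLinearMap (Matrix.toEuclideanLin A)‖

/-- The singular values of a real square matrix: the eigenvalues of `√(Aᵀ A)`
(equivalently, the square roots of the eigenvalues of `Aᵀ A = Aᴴ A`), in some order. -/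
def singularValues {n : ℕ} (A : Matrix (Fin n) (Fin n) ℝ) : Fin n → ℝ :=
  fun i => Real.sqrt ((by simpa using Matrix.isHermitian_conjTranspose_mul_self A : (Matrix.transpose A * A).IsHermitian).eigenvalues i)

/-- `k`-th elementary symmetric function of `n` numbers. -/
def Sk {n : ℕ} (k : ℕ) (μ : Fin n → ℝ) : ℝ :=
  ∑ s ∈ Finset.powersetCard k Finset.univ, ∏ i ∈ s, μ i

/-- `C_k(A)`: the `k`-th elementary symmetric function of the singular values of `A`. -/
def Ck {n : ℕ} (k : ℕ) (A : Matrix (Fin n) (Fin n) ℝ) : ℝ :=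
  Sk k (singularValues A)

/-- The Hessian matrix of a function `g : ℝⁿ → ℝ` at `x`. -/
def hess {n : ℕ} (g : Euc n → ℝ) (x : Euc n) : Matrix (Fin n) (Fin n) ℝ :=
  Matrix.of fun i j =>
    fderiv ℝ (fun y => fderiv ℝ g y (EuclideanSpace.single j 1)) x (EuclideanSpace.single i 1)

/-- The Jacobian matrix of a map `h : ℝⁿ → ℝⁿ` at `x`. -/
def jac {n : ℕ} (h : Euc n → Euc n) (x : Euc n) : Matrix (Fin n) (Fin n) ℝ :=
  Matrix.of fun i j => fderiv ℝ h x (EuclideanSpace.single j 1) i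

/-- The closed cube with "lower--left" corner `a` and side length `r`. -/
def cube {n : ℕ} (a : Euc n) (r : ℝ) : Set (Euc n) := {x | ∀ i, x i ∈ Icc (a i) (a i + r)}

/-- The open unit cube `(0,1)ⁿ`. -/
def openUnitCube (n : ℕ) : Set (Euc n) := {x | ∀ i, x i ∈ Ioo (0:ℝ) 1}

/-- The closed unit cube `Q₀ = [0,1]ⁿ`. -/
def closedUnitCube (n : ℕ) : Set (Euc n) := {x | ∀ i, x i ∈ Icc (0:ℝ) 1}

/-- The closed subcube of side `1/m` of `[0,1]ⁿ` indexed by `z ∈ {0,…,m-1}ⁿ`;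
these cubes form the partition `𝒬(m)`. -/
def gridCube {n : ℕ} (m : ℕ) (z : Fin n → ℕ) : Set (Euc n) :=
  {x | ∀ i, x i ∈ Icc ((z i : ℝ) / m) (((z i : ℝ) + 1) / m)}

/-- `p` as an extended nonnegative real exponent. -/
def pExp (p : ℝ) : ℝ≥0∞ := ENNReal.ofReal p

/-- The conjugate exponent `p'` of `p ∈ [1, ∞)`, as an extended nonnegative real. -/
def dualExp (p : ℝ) : ℝ≥0∞ := if p = 1 then ⊤ else ENNReal.ofReal (p / (p - 1))

/-- Test functions on `Ω`: smooth compactly supported functions with support inside `Ω`. -/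
def IsTestFun {n : ℕ} (Ω : Set (Euc n)) (φ : Euc n → ℝ) : Prop :=
  ContDiff ℝ (⊤ : ℕ∞) φ ∧ HasCompactSupport φ ∧ tsupport φ ⊆ Ω

/-- `v` is the `i`-th weak (distributional) partial derivative of `u` on `Ω`. -/
def HasWeakPDeriv {n : ℕ} (Ω : Set (Euc n)) (i : Fin n) (u v : Euc n → ℝ) : Prop :=
  ∀ φ : Euc n → ℝ, IsTestFun Ω φ →
    ∫ x in Ω, u x * fderiv ℝ φ x (EuclideanSpace.single i 1) = - ∫ x in Ω, v x * φ x

/-- `u ∈ W^{2,p}(Ω)`, with weak gradient `Du` and weak Hessian `D2u`. -/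
def MemW2p {n : ℕ} (Ω : Set (Euc n)) (p : ℝ) (u : Euc n → ℝ)
    (Du : Euc n → Fin n → ℝ) (D2u : Euc n → Matrix (Fin n) (Fin n) ℝ) : Prop :=
  MemLp u (pExp p) (volume.restrict Ω) ∧
  (∀ i, MemLp (fun x => Du x i) (pExp p) (volume.restrict Ω)) ∧
  (∀ i j, MemLp (fun x => D2u x i j) (pExp p) (volume.restrict Ω)) ∧
  (∀ i, HasWeakPDeriv Ω i u (fun x => Du x i)) ∧
  (∀ i j, HasWeakPDeriv Ω j (fun x => Du x i) (fun x => D2u x i j))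

/-- The `W^{2,p}(Ω)`-norm of `u` (expressed through its weak gradient and Hessian). -/
def W2pNorm {n : ℕ} (Ω : Set (Euc n)) (p : ℝ) (u : Euc n → ℝ)
    (Du : Euc n → Fin n → ℝ) (D2u : Euc n → Matrix (Fin n) (Fin n) ℝ) : ℝ :=
  (eLpNorm u (pExp p) (volume.restrict Ω)).toReal +
  (∑ i, (eLpNorm (fun x => Du x i) (pExp p) (volume.restrict Ω)).toReal) +
  (∑ i, ∑ j, (eLpNorm (fun x => D2u x i j) (pExp p) (volume.restrict Ω)).toReal)

/-- Weak convergence `u_j ⇀ v` in `W^{2,p}(Ω)`: boundedness in norm together with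
convergence of `u_j`, `Du_j`, `D²u_j` tested against arbitrary `L^{p'}` functions. -/
def WeakW2pTendsto {n : ℕ} (Ω : Set (Euc n)) (p : ℝ)
    (u : ℕ → Euc n → ℝ) (Du : ℕ → Euc n → Fin n → ℝ)
    (D2u : ℕ → Euc n → Matrix (Fin n) (Fin n) ℝ)
    (v : Euc n → ℝ) (Dv : Euc n → Fin n → ℝ)
    (D2v : Euc n → Matrix (Fin n) (Fin n) ℝ) : Prop :=
  (∃ M : ℝ, ∀ j, W2pNorm Ω p (u j) (Du j) (D2u j) ≤ M) ∧
  (∀ g : Euc n → ℝ, MemLp g (dualExp p) (volume.restrict Ω) →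
    Tendsto (fun j => ∫ x in Ω, u j x * g x) atTop (𝓝 (∫ x in Ω, v x * g x)) ∧
    (∀ i, Tendsto (fun j => ∫ x in Ω, Du j x i * g x) atTop
      (𝓝 (∫ x in Ω, Dv x i * g x))) ∧
    (∀ i l, Tendsto (fun j => ∫ x in Ω, D2u j x i l * g x) atTop
      (𝓝 (∫ x in Ω, D2v x i l * g x))))

/-- `u ∈ W^{1,p}(Ω, ℝⁿ)`, with weak Jacobian matrix `Du`. -/
def MemW1pMap {n : ℕ} (Ω : Set (Euc n)) (p : ℝ) (u : Euc n → Euc n)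
    (Du : Euc n → Matrix (Fin n) (Fin n) ℝ) : Prop :=
  (∀ i, MemLp (fun x => u x i) (pExp p) (volume.restrict Ω)) ∧
  (∀ i j, MemLp (fun x => Du x i j) (pExp p) (volume.restrict Ω)) ∧
  (∀ i j, HasWeakPDeriv Ω j (fun x => u x i) (fun x => Du x i j))

/-- The `W^{1,p}(Ω,ℝⁿ)`-norm of a map `u` with weak Jacobian `Du`. -/
def W1pNorm {n : ℕ} (Ω : Set (Euc n)) (p : ℝ) (u : Euc n → Euc n)
    (Du : Euc n → Matrix (Fin n) (Fin n) ℝ) : ℝ :=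
  (∑ i, (eLpNorm (fun x => u x i) (pExp p) (volume.restrict Ω)).toReal) +
  (∑ i, ∑ j, (eLpNorm (fun x => Du x i j) (pExp p) (volume.restrict Ω)).toReal)

/-- Weak convergence `u_j ⇀ v` in `W^{1,p}(Ω,ℝⁿ)`. -/
def WeakW1pTendsto {n : ℕ} (Ω : Set (Euc n)) (p : ℝ)
    (u : ℕ → Euc n → Euc n) (Du : ℕ → Euc n → Matrix (Fin n) (Fin n) ℝ)
    (v : Euc n → Euc n) (Dv : Euc n → Matrix (Fin n) (Fin n) ℝ) : Prop :=
  (∃ M : ℝ, ∀ j, W1pNorm Ω p (u j) (Du j) ≤ M) ∧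
  (∀ g : Euc n → ℝ, MemLp g (dualExp p) (volume.restrict Ω) →
    (∀ i, Tendsto (fun j => ∫ x in Ω, u j x i * g x) atTop
      (𝓝 (∫ x in Ω, v x i * g x))) ∧
    (∀ i l, Tendsto (fun j => ∫ x in Ω, Du j x i l * g x) atTop
      (𝓝 (∫ x in Ω, Dv x i l * g x))))

/-- `Ω` is a bounded open set with Lipschitz boundary: near every boundary point,
after choosing a unit direction `v`, the set `Ω` is the open region above the graph of a
Lipschitz function on the hyperplane orthogonal to `v`. -/
def IsLipschitzDomain {n : ℕ} (Ω : Set (Euc n)) : Prop :=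
  IsOpen Ω ∧ Bornology.IsBounded Ω ∧
  ∀ x ∈ frontier Ω, ∃ v : Euc n, ‖v‖ = 1 ∧ ∃ r > (0:ℝ), ∃ L : NNReal, ∃ φ : Euc n → ℝ,
    LipschitzWith L φ ∧
    ∀ y ∈ Metric.ball x r, (y ∈ Ω ↔ φ (y - (inner ℝ y v : ℝ) • v) < (inner ℝ y v : ℝ))

/-- The `α`-Hölder seminorm of `G` on the set `S`. -/
def holderSemi {n : ℕ} {F : Type*} [NormedAddCommGroup F] (α : ℝ) (S : Set (Euc n))
    (G : Euc n → F) : ℝ :=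
  sSup {c | ∃ x ∈ S, ∃ y ∈ S, x ≠ y ∧ c = ‖G y - G x‖ / dist y x ^ α}

/-- The sup-norm of `f` on the set `S`. -/
def supNorm {n : ℕ} {F : Type*} [NormedAddCommGroup F] (S : Set (Euc n)) (f : Euc n → F) : ℝ :=
  sSup ((fun x => ‖f x‖) '' S)

/-- The `C^{1,α}(S)` norm of a function `u` whose (extended) derivative is `G`. -/
def C1AlphaNorm {n : ℕ} (α : ℝ) (S : Set (Euc n)) (u : Euc n → ℝ)
    (G : Euc n → Euc n →L[ℝ] ℝ) : ℝ :=
  supNorm S u + supNorm S G + holderSemi α S G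

/-- The `C^{0,α}(S)` norm of a map `u`. -/
def C0AlphaNorm {n : ℕ} {F : Type*} [NormedAddCommGroup F] (α : ℝ) (S : Set (Euc n))
    (u : Euc n → F) : ℝ :=
  supNorm S u + holderSemi α S u

/-- `u` belongs to the little Hölder space `c^{1,α}` on `S = closure U`: `u` is differentiable
on the open set `U` with derivative `G`, `u` and `G` extend continuously to `S`, and the
`α`-Hölder modulus of continuity `ω(G, r^α)` of `G` tends to `0` as `r → 0`. -/
def MemLittleHolderC1 {n : ℕ} (α : ℝ) (U S : Set (Euc n)) (u : Euc n → ℝ)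
    (G : Euc n → Euc n →L[ℝ] ℝ) : Prop :=
  (∀ x ∈ U, HasFDerivAt u (G x) x) ∧
  ContinuousOn u S ∧ ContinuousOn G S ∧
  (∀ ε > (0:ℝ), ∃ δ > (0:ℝ), ∀ x ∈ S, ∀ y ∈ S, dist y x < δ →
    ‖G y - G x‖ ≤ ε * dist y x ^ α)

/-- `u` belongs to the little Hölder space `c^{0,α}(S)`. -/
def MemLittleHolderC0 {n : ℕ} {F : Type*} [NormedAddCommGroup F] (α : ℝ) (S : Set (Euc n))
    (u : Euc n → F) : Prop :=
  ContinuousOn u S ∧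
  (∀ ε > (0:ℝ), ∃ δ > (0:ℝ), ∀ x ∈ S, ∀ y ∈ S, dist y x < δ →
    ‖u y - u x‖ ≤ ε * dist y x ^ α)

/-- The modulus of continuity `ω(G, t) = sup {‖G y - G x‖ : x, y ∈ S, |y - x| ≤ t}`. -/
def modCont {n : ℕ} {F : Type*} [NormedAddCommGroup F] (S : Set (Euc n)) (G : Euc n → F)
    (t : ℝ) : ℝ :=
  sSup {c | ∃ x ∈ S, ∃ y ∈ S, dist y x ≤ t ∧ c = ‖G y - G x‖}

/-!
Fix `ε > 0` and write `g j = C_k(∇²f_j)`, a continuous nonnegative function. By Egorov, `g j → 0`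
uniformly off a set `t ⊆ Q₀` of volume `≤ ε`; pick `j` with `g j ≤ ε/2` on `Q₀ \ t` and
`τ^(j+1)/(1-τ) ≤ ε/6`, and let `G` be the union of the cubes of `𝒬(m_{j+1})` meeting `Q₀ \ t`, so
that `|Q₀ \ G| ≤ ε`. By (ii), `g j ≤ ε/2 + 2τ^(j+1)` on every cube `Q` touching `G`. Every cube of
a finer grid `𝒬(m_i)` lies in one cube of `𝒬(m_{j+1})`, so (i) also holds on `Q` at all scales
`i > j`, and telescoping gives `∫_Q g l ≤ (ε/2 + 2τ^(j+1) + τ^(j+1)/(1-τ)) |Q| ≤ ε |Q|` for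
`l ≥ j`. Testing the weak-* convergence against a cutoff that is `1` on `G` and supported in the
cubes touching `G` yields `μ G ≤ ε`. By Borel–Cantelli, such sets for `ε = 2⁻ⁱ` combine into a
`μ`-null set of full Lebesgue measure in `Q₀`.
-/

theorem MeasureTheory.Measure.mutuallySingular_of_forall_exists_le {α : Type*} [MeasurableSpace α]
    {μ ν : Measure α}
    (h : ∀ ε : ℝ, 0 < ε → ∃ s, MeasurableSet s ∧ μ s ≤ ENNReal.ofReal ε ∧ ν sᶜ ≤ ENNReal.ofReal ε) :
    μ ⟂ₘ ν := by
  choose s hs hμs hνs using fun i : ℕ => h ((1 / 2) ^ i) (by positivity)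
  have borel_cantelli : ∀ (ρ : Measure α) (t : ℕ → Set α),
      (∀ i, ρ (t i) ≤ ENNReal.ofReal ((1 / 2) ^ i)) → ρ (limsup t atTop) = 0 := by
    refine fun ρ t ht =>
      measure_limsup_atTop_eq_zero (ne_top_of_le_ne_top ?_ (ENNReal.tsum_le_tsum ht))
    rw [← ENNReal.ofReal_tsum_of_nonneg (fun i => by positivity) summable_geometric_two]
    exact ENNReal.ofReal_ne_top
  refine ⟨limsup s atTop, MeasurableSet.measurableSet_limsup hs, borel_cantelli μ s hμs, ?_⟩
  rw [limsup_compl]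
  exact measure_mono_null liminf_le_limsup (borel_cantelli ν _ hνs)

theorem MeasureTheory.setIntegral_biUnion_le_sum {X ι : Type*} [MeasurableSpace X] {μ : Measure X}
    (s : Finset ι) {t : ι → Set X} {f : X → ℝ} (hf : 0 ≤ f)
    (hfi : ∀ i ∈ s, IntegrableOn f (t i) μ) :
    ∫ x in ⋃ i ∈ s, t i, f x ∂μ ≤ ∑ i ∈ s, ∫ x in t i, f x ∂μ := by
  classical
  induction s using Finset.induction_on with
  | empty => simp
  | insert a s ha ih =>
    rw [Finset.forall_mem_insert] at hfi
    rw [Finset.set_biUnion_insert, Finset.sum_insert ha]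
    have hfs : IntegrableOn f (⋃ i ∈ s, t i) μ := integrableOn_finset_iUnion.2 hfi.2
    calc ∫ x in t a ∪ ⋃ i ∈ s, t i, f x ∂μ
        ≤ ∫ x, f x ∂(μ.restrict (t a) + μ.restrict (⋃ i ∈ s, t i)) :=
          integral_mono_measure (Measure.restrict_union_le _ _) (.of_forall hf)
            (Integrable.add_measure hfi.1 hfs)
      _ = ∫ x in t a, f x ∂μ + ∫ x in ⋃ i ∈ s, t i, f x ∂μ := integral_add_measure hfi.1 hfs
      _ ≤ _ := add_le_add_right (ih hfi.2) _

theorem MeasureTheory.measure_le_of_tendsto_setIntegral_mul {X : Type*} [PseudoMetricSpace X]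
    [MeasurableSpace X] [OpensMeasurableSpace X] {μ ν : Measure X} [IsFiniteMeasure μ] {Q : Set X}
    (hμQ : μ Qᶜ = 0) {g : ℕ → X → ℝ} (hg : ∀ l, 0 ≤ g l) (hgi : ∀ l, IntegrableOn (g l) Q ν)
    (hlim : ∀ φ : X → ℝ, ContinuousOn φ Q →
      Tendsto (fun l => ∫ x in Q, g l x * φ x ∂ν) atTop (𝓝 (∫ x in Q, φ x ∂μ)))
    {G : Set X} {r κ : ℝ} (hr : 0 < r)
    (hκ : ∀ᶠ l in atTop, ∫ x in Q ∩ thickening r G, g l x ∂ν ≤ κ) :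
    μ G ≤ ENNReal.ofReal κ := by
  set φ : X → ℝ := fun x => thickenedIndicator hr G x
  have hφc : Continuous φ := NNReal.continuous_coe.comp (thickenedIndicator hr G).continuous
  have hφi : Integrable φ μ := Integrable.of_bound hφc.aestronglyMeasurable 1
    (.of_forall fun x => by simpa [φ] using thickenedIndicator_le_one hr G x)
  have hG : μ G ≤ ∫⁻ x, thickenedIndicator hr G x ∂μ := by
    calc μ G ≤ μ {x | 1 ≤ (thickenedIndicator hr G x : ℝ≥0∞)} :=
          measure_mono fun x hx => by
            simp only [mem_ofPred_eq, thickenedIndicator_one hr G hx, ENNReal.coe_one, le_refl]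
      _ ≤ _ := by
          simpa using mul_meas_ge_le_lintegral₀ (μ := μ)
            (ENNReal.continuous_coe.comp (thickenedIndicator hr G).continuous).aemeasurable 1
  have hμ : μ.restrict Q = μ := Measure.restrict_eq_self_of_ae_mem (by rwa [ae_iff])
  refine hG.trans ?_
  rw [lintegral_coe_eq_integral _ hφi, ← hμ]
  refine ENNReal.ofReal_le_ofReal (le_of_tendsto (hlim φ hφc.continuousOn) ?_)
  filter_upwards [hκ] with l hl
  refine le_trans ?_ ((setIntegral_indicator isOpen_thickening.measurableSet).trans_le hl)
  refine integral_mono_of_nonneg (.of_forall fun x => mul_nonneg (hg l x) (by simp [φ]))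
    ((hgi l).indicator isOpen_thickening.measurableSet) (.of_forall fun x => ?_)
  by_cases hx : x ∈ thickening r G
  · rw [indicator_of_mem hx]
    exact mul_le_of_le_one_right (hg l x) (by exact_mod_cast thickenedIndicator_le_one hr G x)
  · simp only [indicator_of_notMem hx, φ, thickenedIndicator_zero hr G hx, NNReal.coe_zero,
      mul_zero, le_refl]

theorem le_add_of_abs_sub_le_geometric {a : ℕ → ℝ} {τ C : ℝ} (hτ0 : 0 ≤ τ) (hτ1 : τ < 1)
    (hC : 0 ≤ C) {j : ℕ} (h : ∀ i, j ≤ i → |a (i + 1) - a i| ≤ C * τ ^ (i + 1)) {l : ℕ}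
    (hl : j ≤ l) : a l ≤ a j + C * (τ ^ (j + 1) / (1 - τ)) := by
  obtain ⟨N, rfl⟩ := Nat.exists_eq_add_of_le hl
  have hdist := dist_le_range_sum_of_dist_le (f := fun k => a (j + k)) N
    (d := fun k => C * τ ^ (j + k + 1)) fun {k} _ => by
      rw [Real.dist_eq, abs_sub_comm]
      exact h (j + k) (by omega)
  have hgeom : ∑ k ∈ Finset.range N, C * τ ^ (j + k + 1) ≤ C * (τ ^ (j + 1) / (1 - τ)) := by
    have hsum : ∑ k ∈ Finset.range N, C * τ ^ (j + k + 1) =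
        C * ∑ k ∈ Finset.Ico (j + 1) (j + 1 + N), τ ^ k := by
      simp only [Finset.sum_Ico_eq_sum_range, add_tsub_cancel_left, Finset.mul_sum]
      exact Finset.sum_congr rfl fun k _ => by ring_nf
    rw [hsum]
    exact mul_le_mul_of_nonneg_left (geom_sum_Ico_le_of_lt_one hτ0 hτ1) hC
  rw [Real.dist_eq, add_zero] at hdist
  linarith [le_abs_self (a (j + N) - a j), abs_sub_comm (a j) (a (j + N))]

theorem dvd_of_le_of_forall_dvd_succ {m : ℕ → ℕ} (hdiv : ∀ j, 1 ≤ j → m j ∣ m (j + 1)) {j i : ℕ}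
    (hji : j ≤ i) : m (j + 1) ∣ m (i + 1) :=
  Nat.rel_of_forall_rel_succ_of_le (· ∣ ·) (f := fun i => m (i + 1))
    (fun i => hdiv (i + 1) (Nat.le_add_left 1 i)) hji

section SingularValues

open Matrix Polynomial

theorem Matrix.isHermitian_transpose_mul_self {ι : Type*} [Fintype ι] (A : Matrix ι ι ℝ) :
    (Aᵀ * A).IsHermitian := by
  simpa using isHermitian_conjTranspose_mul_self A

-- `Matrix` is a type synonym, so this is not found through the product topology automatically.
instance {ι κ R : Type*} [Countable ι] [Countable κ] [TopologicalSpace R]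
    [FirstCountableTopology R] : FirstCountableTopology (Matrix ι κ R) :=
  inferInstanceAs (FirstCountableTopology (ι → κ → R))

variable {ι : Type*} [Fintype ι] [DecidableEq ι]

theorem Matrix.IsHermitian.map_eigenvalues_eq_of_eq_conj {B U : Matrix ι ι ℝ}
    (hB : B.IsHermitian) (hU : U ∈ unitaryGroup ι ℝ) {ρ : ι → ℝ}
    (h : B = U * diagonal ρ * star U) :
    Finset.univ.val.map hB.eigenvalues = Finset.univ.val.map ρ := by
  have hc : B.charpoly = (diagonal ρ).charpoly := by
    rw [h, charpoly_mul_comm, ← mul_assoc, Unitary.star_mul_self_of_mem hU, one_mul]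
  have := hB.roots_charpoly_eq_eigenvalues
  rw [hc, charpoly_diagonal] at this
  simpa [Polynomial.roots_prod, Finset.prod_ne_zero_iff, X_sub_C_ne_zero] using this.symm

theorem Matrix.IsHermitian.eq_eigenvectorUnitary_mul_diagonal {B : Matrix ι ι ℝ}
    (hB : B.IsHermitian) :
    B = (hB.eigenvectorUnitary : Matrix ι ι ℝ) * diagonal hB.eigenvalues *
      star (hB.eigenvectorUnitary : Matrix ι ι ℝ) := by
  simpa using hB.spectral_theorem

theorem Matrix.eigenvalues_transpose_mul_self_mem_Icc (A : Matrix ι ι ℝ) (i : ι) :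
    (isHermitian_transpose_mul_self A).eigenvalues i ∈ Icc 0 (Aᵀ * A).trace := by
  have hpos : ∀ j, 0 ≤ (isHermitian_transpose_mul_self A).eigenvalues j := by
    simpa using (posSemidef_conjTranspose_mul_self A).eigenvalues_nonneg
  refine ⟨hpos i, ?_⟩
  rw [(isHermitian_transpose_mul_self A).trace_eq_sum_eigenvalues]
  simpa using Finset.single_le_sum (fun j _ => hpos j) (Finset.mem_univ i)

end SingularValues

section Ck

open Matrix

variable {n : ℕ}

theorem Ck_eq_of_transpose_mul_self_eq (k : ℕ) {A U : Matrix (Fin n) (Fin n) ℝ}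
    (hU : U ∈ unitaryGroup (Fin n) ℝ) {ρ : Fin n → ℝ} (h : Aᵀ * A = U * diagonal ρ * star U) :
    Ck k A = Sk k fun i => √(ρ i) := by
  have h' := congrArg (Multiset.map Real.sqrt)
    ((isHermitian_transpose_mul_self A).map_eigenvalues_eq_of_eq_conj hU h)
  simp only [Multiset.map_map] at h'
  simp only [Ck, Sk, singularValues, ← Finset.esymm_map_val]
  exact congrArg (Multiset.esymm · k) h'

theorem Ck_nonneg (k : ℕ) (A : Matrix (Fin n) (Fin n) ℝ) : 0 ≤ Ck k A := by
  unfold Ck Sk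
  exact Finset.sum_nonneg fun _ _ => Finset.prod_nonneg fun _ _ => Real.sqrt_nonneg _

theorem continuous_Ck (k : ℕ) : Continuous (Ck k : Matrix (Fin n) (Fin n) ℝ → ℝ) := by
  -- Along a subsequence the eigenvalues and eigenvectors of `Aᵀ A` converge, by compactness; the
  -- limits diagonalize `A₀ᵀ A₀`, and `Ck k` only sees the multiset of eigenvalues.
  refine continuous_iff_seqContinuous.2 fun A A₀ hA => tendsto_of_subseq_tendsto fun ns hns => ?_
  set hB := fun i => isHermitian_transpose_mul_self (A (ns i))
  have hgram : Continuous fun M : Matrix (Fin n) (Fin n) ℝ => Mᵀ * M := by fun_prop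
  have hAns : Tendsto (fun i => A (ns i)) atTop (𝓝 A₀) := hA.comp hns
  obtain ⟨R, hR⟩ := (((hgram.matrix_trace).tendsto A₀).comp hAns).bddAbove_range
  set K : Set ((Fin n → ℝ) × Matrix (Fin n) (Fin n) ℝ) :=
    univ.pi (fun _ => Icc 0 R) ×ˢ ((unitaryGroup (Fin n) ℝ : Set (Matrix (Fin n) (Fin n) ℝ)) ∩
      univ.pi fun _ => univ.pi fun _ => Icc (-1) 1)
  have hK : IsCompact K := (isCompact_univ_pi fun _ => isCompact_Icc).prod
    ((isCompact_univ_pi fun _ => isCompact_univ_pi fun _ => isCompact_Icc).inter_left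
      (isClosed_unitary (R := Matrix (Fin n) (Fin n) ℝ)))
  have hmem : ∀ i, ((hB i).eigenvalues, ((hB i).eigenvectorUnitary : Matrix _ _ ℝ)) ∈ K := by
    refine fun i => ⟨fun j _ => ?_, (hB i).eigenvectorUnitary.2, fun a _ b _ => ?_⟩
    · have := eigenvalues_transpose_mul_self_mem_Icc (A (ns i)) j
      exact ⟨this.1, this.2.trans (hR ⟨i, rfl⟩)⟩
    · exact abs_le.1 (by simpa using entry_norm_bound_of_unitary (hB i).eigenvectorUnitary.2 a b)
  obtain ⟨⟨ρ, U⟩, ⟨-, hU, -⟩, φ, hφ, hlim⟩ := hK.tendsto_subseq hmem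
  have hconj : Continuous fun p : (Fin n → ℝ) × Matrix (Fin n) (Fin n) ℝ =>
      p.2 * diagonal p.1 * star p.2 := by
    simp only [star_eq_conjTranspose]
    fun_prop
  have hspec : A₀ᵀ * A₀ = U * diagonal ρ * star U :=
    tendsto_nhds_unique ((hgram.tendsto A₀).comp (hAns.comp hφ.tendsto_atTop))
      (((hconj.tendsto _).comp hlim).congr fun i =>
        (hB (φ i)).eq_eigenvectorUnitary_mul_diagonal.symm)
  have hF : Continuous fun ρ : Fin n → ℝ => Sk k fun i => √(ρ i) := by unfold Sk; fun_prop
  refine ⟨φ, ?_⟩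
  rw [Ck_eq_of_transpose_mul_self_eq k hU hspec]
  refine ((hF.tendsto ρ).comp ((continuous_fst.tendsto _).comp hlim)).congr fun i => ?_
  exact (Ck_eq_of_transpose_mul_self_eq k (hB (φ i)).eigenvectorUnitary.2
    (hB (φ i)).eq_eigenvectorUnitary_mul_diagonal).symm

theorem continuous_hess {g : Euc n → ℝ} (hg : ContDiff ℝ 2 g) : Continuous (hess g) := by
  have hD : ∀ j, ContDiff ℝ 1 fun y => fderiv ℝ g y (EuclideanSpace.single j 1) := fun j =>
    (hg.fderiv_right (by norm_num)).clm_apply contDiff_const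
  exact continuous_matrix fun i j =>
    ((hD j).continuous_fderiv one_ne_zero).clm_apply continuous_const

end Ck

section GridCubes

variable {n : ℕ}

theorem mem_Icc_div_iff {K : Type*} [Field K] [LinearOrder K] [IsStrictOrderedRing K]
    {x a m : K} (hm : 0 < m) :
    x ∈ Icc (a / m) ((a + 1) / m) ↔ a ≤ x * m ∧ x * m ≤ a + 1 := by
  rw [mem_Icc, div_le_iff₀ hm, le_div_iff₀ hm]

theorem volume_box (T : Fin n → Set ℝ) (hT : ∀ i, MeasurableSet (T i)) :
    volume {x : Euc n | ∀ i, x i ∈ T i} = ∏ i, volume (T i) := by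
  have h := (EuclideanSpace.volume_preserving_symm_measurableEquiv_toLp (Fin n)).measure_preimage
    (MeasurableSet.univ_pi hT).nullMeasurableSet
  have hset : (MeasurableEquiv.toLp 2 (Fin n → ℝ)).symm ⁻¹' univ.pi T =
      {x : Euc n | ∀ i, x i ∈ T i} := by
    ext x
    simp only [mem_preimage, Set.mem_pi, mem_univ, forall_true_left, mem_ofPred_eq]
    rfl
  rw [← hset, h, volume_pi_pi]

theorem isCompact_box (a b : Fin n → ℝ) : IsCompact {x : Euc n | ∀ i, x i ∈ Icc (a i) (b i)} := by
  have h : {x : Euc n | ∀ i, x i ∈ Icc (a i) (b i)} =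
      (EuclideanSpace.equiv (Fin n) ℝ).toHomeomorph ⁻¹' univ.pi fun i => Icc (a i) (b i) := by
    ext
    simp [Pi.le_def, forall_and]
  rw [h]
  exact (Homeomorph.isCompact_preimage _).2 (isCompact_univ_pi fun _ => isCompact_Icc)

theorem isCompact_gridCube (m : ℕ) (z : Fin n → ℕ) : IsCompact (gridCube (n := n) m z) :=
  isCompact_box _ _

theorem measurableSet_gridCube (m : ℕ) (z : Fin n → ℕ) : MeasurableSet (gridCube (n := n) m z) :=
  (isCompact_gridCube m z).isClosed.measurableSet

theorem volume_gridCube (m : ℕ) (z : Fin n → ℕ) :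
    volume (gridCube (n := n) m z) = ENNReal.ofReal (m : ℝ)⁻¹ ^ n := by
  rw [gridCube, volume_box _ fun _ => measurableSet_Icc]
  simp [Real.volume_Icc, add_div]

theorem toReal_volume_gridCube (m : ℕ) (z : Fin n → ℕ) :
    (volume (gridCube (n := n) m z)).toReal = (m : ℝ)⁻¹ ^ n := by
  simp [volume_gridCube]

theorem volume_setOf_apply_eq (i : Fin n) (c : ℝ) : volume {x : Euc n | x i = c} = 0 := by
  classical
  have h := volume_box (n := n) (fun j => if j = i then {c} else univ) fun j => by
    split_ifs <;> simp
  rw [Finset.prod_eq_zero (Finset.mem_univ i) (by simp)] at h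
  refine measure_mono_null ?_ h
  intro x hx j
  split_ifs with hj
  · exact hj ▸ hx
  · trivial

theorem aedisjoint_gridCube {M : ℕ} {w w' : Fin n → ℕ} (h : w ≠ w') :
    AEDisjoint volume (gridCube (n := n) M w) (gridCube M w') := by
  obtain ⟨i, hi⟩ := Function.ne_iff.1 h
  suffices key : ∀ {v v' : Fin n → ℕ}, v i < v' i →
      gridCube (n := n) M v ∩ gridCube M v' ⊆ {x | x i = v' i / M} by
    rcases hi.lt_or_gt with hlt | hlt
    · exact measure_mono_null (key hlt) (volume_setOf_apply_eq i _)
    · rw [AEDisjoint, inter_comm]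
      exact measure_mono_null (key hlt) (volume_setOf_apply_eq i _)
  intro v v' hlt x ⟨hx, hx'⟩
  have : ((v i : ℝ) + 1) / M ≤ v' i / M :=
    div_le_div_of_nonneg_right (by exact_mod_cast hlt) M.cast_nonneg
  exact le_antisymm ((hx i).2.trans this) (hx' i).1

theorem exists_fin_mem_Icc {c : ℕ} (hc : 0 < c) {y : ℝ} (hy : y ∈ Icc 0 (c : ℝ)) :
    ∃ o : Fin c, y ∈ Icc (o : ℝ) (o + 1) := by
  rcases hy.2.lt_or_eq with hlt | rfl
  · exact ⟨⟨⌊y⌋₊, (Nat.floor_lt hy.1).2 hlt⟩, Nat.floor_le hy.1, (Nat.lt_floor_add_one y).le⟩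
  · exact ⟨⟨c - 1, by omega⟩, by simp [Nat.cast_sub hc], by simp [Nat.cast_sub hc]⟩

theorem gridCube_eq_iUnion {m c : ℕ} (hm : 0 < m) (hc : 0 < c) (z : Fin n → ℕ) :
    gridCube (n := n) m z = ⋃ o : Fin n → Fin c, gridCube (c * m) fun i => c * z i + o i := by
  have hm' : (0 : ℝ) < m := by exact_mod_cast hm
  have hc' : (0 : ℝ) < c := by exact_mod_cast hc
  ext x
  simp only [gridCube, mem_iUnion, mem_ofPred_eq, Nat.cast_mul, Nat.cast_add, mem_Icc_div_iff hm',
    mem_Icc_div_iff (by positivity : (0 : ℝ) < c * m)]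
  constructor
  · intro hx
    choose o ho using fun i => exists_fin_mem_Icc hc
      (y := c * (x i * m) - c * z i) ⟨by nlinarith [(hx i).1], by nlinarith [(hx i).2]⟩
    exact ⟨o, fun i => ⟨by nlinarith [(ho i).1], by nlinarith [(ho i).2]⟩⟩
  · rintro ⟨o, ho⟩ i
    have ho_lt : ((o i : ℕ) : ℝ) + 1 ≤ c := by exact_mod_cast (o i).2
    have ho_nonneg : (0 : ℝ) ≤ (o i : ℕ) := Nat.cast_nonneg _
    constructor
    · refine le_of_mul_le_mul_left ?_ hc'
      nlinarith [(ho i).1]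
    · refine le_of_mul_le_mul_left ?_ hc'
      nlinarith [(ho i).2]

theorem closedUnitCube_eq_iUnion {M : ℕ} (hM : 0 < M) :
    closedUnitCube n = ⋃ w : Fin n → Fin M, gridCube M fun i => w i := by
  have h := gridCube_eq_iUnion (n := n) one_pos hM 0
  simp only [mul_one, Pi.zero_apply, mul_zero, zero_add] at h
  rw [← h]
  ext x
  simp [closedUnitCube, gridCube]

theorem integral_gridCube_eq_sum {h : Euc n → ℝ} (hh : Continuous h) {m c : ℕ} (hm : 0 < m)
    (hc : 0 < c) (z : Fin n → ℕ) :
    ∫ x in gridCube m z, h x =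
      ∑ o : Fin n → Fin c, ∫ x in gridCube (c * m) (fun i => c * z i + o i), h x := by
  rw [gridCube_eq_iUnion hm hc z, integral_iUnion_ae, tsum_fintype]
  · exact fun o => (measurableSet_gridCube _ _).nullMeasurableSet
  · refine fun o o' hne => aedisjoint_gridCube fun h => hne (funext fun i => Fin.ext ?_)
    have := congrFun h i
    omega
  · rw [← gridCube_eq_iUnion hm hc]
    exact hh.continuousOn.integrableOn_compact (isCompact_gridCube _ _)

theorem gridCube_inter_nonempty_of_dist_lt {M : ℕ} {w z : Fin n → ℕ} {x y : Euc n}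
    (hx : x ∈ gridCube M w) (hy : y ∈ gridCube M z) (hxy : dist x y < (M : ℝ)⁻¹) :
    (gridCube M w ∩ gridCube M z).Nonempty := by
  have hM : (0 : ℝ) < M := inv_pos.1 (dist_nonneg.trans_lt hxy)
  have hclose : ∀ i, w i ≤ z i + 1 ∧ z i ≤ w i + 1 := fun i => by
    have h1 := (mem_Icc_div_iff hM).1 (hx i)
    have h2 := (mem_Icc_div_iff hM).1 (hy i)
    have h3 : |x i * M - y i * M| < 1 := by
      have := (PiLp.dist_apply_le x y i).trans_lt hxy
      rw [Real.dist_eq] at this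
      rw [← sub_mul, abs_mul, abs_of_pos hM]
      exact (mul_lt_mul_of_pos_right this hM).trans_eq (inv_mul_cancel₀ hM.ne')
    obtain ⟨h3l, h3r⟩ := abs_lt.1 h3
    have hwz : (w i : ℝ) < z i + 1 + 1 := by linarith
    have hzw : (z i : ℝ) < w i + 1 + 1 := by linarith
    exact ⟨Nat.lt_succ_iff.1 (by exact_mod_cast hwz), Nat.lt_succ_iff.1 (by exact_mod_cast hzw)⟩
  refine ⟨WithLp.toLp 2 fun i => (max (w i) (z i) : ℕ) / M, fun i => ?_, fun i => ?_⟩ <;>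
  · have := hclose i
    refine ⟨div_le_div_of_nonneg_right ?_ hM.le, div_le_div_of_nonneg_right ?_ hM.le⟩ <;>
    · norm_cast
      omega

theorem abs_integral_gridCube_le_of_dvd {h : Euc n → ℝ} (hh : Continuous h) {m M : ℕ} (hm : 0 < m)
    (hM : 0 < M) (hmM : m ∣ M) {C : ℝ}
    (hfine : ∀ w : Fin n → ℕ, (∀ i, w i < M) →
      |∫ x in gridCube M w, h x| ≤ C * (volume (gridCube M w)).toReal)
    {z : Fin n → ℕ} (hz : ∀ i, z i < m) :
    |∫ x in gridCube m z, h x| ≤ C * (volume (gridCube m z)).toReal := by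
  obtain ⟨c, rfl⟩ := hmM
  have hc : 0 < c := Nat.pos_of_mul_pos_left hM
  have hidx : ∀ o : Fin n → Fin c, ∀ i, c * z i + o i < m * c := fun o i => by
    nlinarith [(o i).2, hz i]
  rw [integral_gridCube_eq_sum hh hm hc z, toReal_volume_gridCube]
  calc |∑ o : Fin n → Fin c, ∫ x in gridCube (c * m) (fun i => c * z i + o i), h x|
      ≤ ∑ o : Fin n → Fin c, |∫ x in gridCube (c * m) (fun i => c * z i + o i), h x| :=
        Finset.abs_sum_le_sum_abs _ _
    _ ≤ ∑ _o : Fin n → Fin c, C * ((m * c : ℕ) : ℝ)⁻¹ ^ n := Finset.sum_le_sum fun o _ => by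
        simpa [mul_comm c m, toReal_volume_gridCube] using hfine _ (hidx o)
    _ = C * (m : ℝ)⁻¹ ^ n := by
        have hc' : (c : ℝ) ≠ 0 := by positivity
        simp only [Finset.sum_const, Finset.card_univ, Fintype.card_fun, Fintype.card_fin,
          nsmul_eq_mul, Nat.cast_pow, Nat.cast_mul]
        rw [mul_left_comm, ← mul_pow, mul_inv, mul_left_comm, mul_inv_cancel₀ hc', mul_one]

theorem isCompact_closedUnitCube : IsCompact (closedUnitCube n) :=
  isCompact_box (n := n) 0 1

theorem volume_closedUnitCube : volume (closedUnitCube n) = 1 := by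
  rw [closedUnitCube, volume_box _ fun _ => measurableSet_Icc]
  simp

def gridHull (M : ℕ) (E : Set (Euc n)) : Set (Euc n) :=
  ⋃ (z : Fin n → Fin M) (_ : (gridCube M (fun i => z i) ∩ E).Nonempty), gridCube M fun i => z i

theorem measurableSet_gridHull (M : ℕ) (E : Set (Euc n)) : MeasurableSet (gridHull M E) :=
  .iUnion fun _ => .iUnion fun _ => measurableSet_gridCube _ _

theorem inter_closedUnitCube_subset_gridHull {M : ℕ} (hM : 0 < M) (E : Set (Euc n)) :
    E ∩ closedUnitCube n ⊆ gridHull M E := fun x ⟨hxE, hxQ⟩ => by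
  obtain ⟨z, hz⟩ := mem_iUnion.1 ((closedUnitCube_eq_iUnion hM).subset hxQ)
  exact mem_iUnion₂.2 ⟨z, ⟨x, hz, hxE⟩, hz⟩

theorem sum_le_of_forall_le_mul_inv_pow {M : ℕ} (hM : 0 < M) (s : Finset (Fin n → Fin M))
    {f : (Fin n → Fin M) → ℝ} {C : ℝ} (hC : 0 ≤ C) (hf : ∀ w ∈ s, f w ≤ C * (M : ℝ)⁻¹ ^ n) :
    ∑ w ∈ s, f w ≤ C := by
  have hcard : (s.card : ℝ) ≤ (M : ℝ) ^ n := by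
    exact_mod_cast s.card_le_univ.trans_eq (by simp)
  have : (M : ℝ) ≠ 0 := by positivity
  calc ∑ w ∈ s, f w ≤ s.card * (C * (M : ℝ)⁻¹ ^ n) := by simpa using Finset.sum_le_sum hf
    _ ≤ M ^ n * (C * (M : ℝ)⁻¹ ^ n) := by gcongr
    _ = C := by rw [mul_left_comm, ← mul_pow, mul_inv_cancel₀ this, one_pow, mul_one]

end GridCubes

section Construction

variable {n : ℕ}

def GridStepBound (τ : ℝ) (m : ℕ → ℕ) (g : ℕ → Euc n → ℝ) : Prop :=
  ∀ j : ℕ, 1 ≤ j → ∀ z : Fin n → ℕ, (∀ i, z i < m j) →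
    |∫ x in gridCube (m j) z, (g j x - g (j - 1) x)| ≤ τ ^ j * (volume (gridCube (m j) z)).toReal

def GridOscBound (τ : ℝ) (m : ℕ → ℕ) (g : ℕ → Euc n → ℝ) : Prop :=
  ∀ j : ℕ, 1 ≤ j → ∀ z : Fin n → ℕ, (∀ i, z i < m j) →
    ∀ x ∈ gridCube (m j) z, ∀ y ∈ gridCube (m j) z, |g (j - 1) y - g (j - 1) x| ≤ τ ^ j

theorem GridStepBound.setIntegral_gridCube_le_add {τ : ℝ} {m : ℕ → ℕ} {g : ℕ → Euc n → ℝ}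
    (hstep : GridStepBound τ m g) (hτ0 : 0 ≤ τ) (hτ1 : τ < 1) (hg : ∀ l, Continuous (g l))
    (hm : ∀ j, 1 ≤ j → 0 < m j) (hdiv : ∀ j, 1 ≤ j → m j ∣ m (j + 1)) {j l : ℕ} (hjl : j ≤ l)
    {z : Fin n → ℕ} (hz : ∀ i, z i < m (j + 1)) :
    ∫ x in gridCube (m (j + 1)) z, g l x ≤ (∫ x in gridCube (m (j + 1)) z, g j x) +
      τ ^ (j + 1) / (1 - τ) * (volume (gridCube (m (j + 1)) z)).toReal := by
  have hint : ∀ i, IntegrableOn (g i) (gridCube (m (j + 1)) z) :=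
    fun i => (hg i).continuousOn.integrableOn_compact (isCompact_gridCube _ _)
  rw [mul_comm]
  refine le_add_of_abs_sub_le_geometric (a := fun i => ∫ x in gridCube (m (j + 1)) z, g i x)
    hτ0 hτ1 ENNReal.toReal_nonneg (fun i hji => ?_) hjl
  rw [← integral_sub (hint _) (hint _), mul_comm]
  refine abs_integral_gridCube_le_of_dvd ((hg _).sub (hg _)) (hm _ le_add_self)
    (hm _ le_add_self) (dvd_of_le_of_forall_dvd_succ hdiv hji) (fun w hw => ?_) hz
  simpa using hstep (i + 1) le_add_self w hw

theorem setIntegral_gridCube_le_of_inter_nonempty {τ : ℝ} {m : ℕ → ℕ} {g : ℕ → Euc n → ℝ}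
    (hosc : GridOscBound τ m g) (hstep : GridStepBound τ m g) (hτ0 : 0 ≤ τ) (hτ1 : τ < 1)
    (hg : ∀ l, Continuous (g l)) (hg0 : ∀ l, 0 ≤ g l) (hm : ∀ j, 1 ≤ j → 0 < m j)
    (hdiv : ∀ j, 1 ≤ j → m j ∣ m (j + 1)) {j l : ℕ} (hjl : j ≤ l) {w z : Fin n → Fin (m (j + 1))}
    (hwz : (gridCube (m (j + 1)) (fun i => w i) ∩ gridCube (m (j + 1)) fun i => z i).Nonempty)
    {x₀ : Euc n} (hx₀ : x₀ ∈ gridCube (m (j + 1)) fun i => z i) :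
    ∫ x in gridCube (m (j + 1)) (fun i => w i), g l x ≤
      (g j x₀ + 2 * τ ^ (j + 1) + τ ^ (j + 1) / (1 - τ)) * (m (j + 1) : ℝ)⁻¹ ^ n := by
  obtain ⟨p, hpw, hpz⟩ := hwz
  have hosc' := fun (v : Fin n → Fin (m (j + 1))) => by
    simpa using hosc (j + 1) le_add_self (fun i => v i) fun i => (v i).2
  have hsup : ∀ x ∈ gridCube (m (j + 1)) (fun i => w i), ‖g j x‖ ≤ g j x₀ + 2 * τ ^ (j + 1) :=
    fun x hx => by
      rw [Real.norm_of_nonneg (hg0 j x)]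
      linarith [(abs_le.1 (hosc' z x₀ hx₀ p hpz)).2, (abs_le.1 (hosc' w p hpw x hx)).2]
  have hbase := (le_abs_self _).trans (norm_setIntegral_le_of_norm_le_const
    ((isCompact_gridCube _ _).measure_lt_top (μ := volume)) hsup)
  have htel := hstep.setIntegral_gridCube_le_add hτ0 hτ1 hg hm hdiv hjl fun i => (w i).2
  rw [measureReal_def] at hbase
  rw [toReal_volume_gridCube] at hbase htel
  linarith

theorem setIntegral_inter_thickening_gridHull_le {τ : ℝ} {m : ℕ → ℕ} {g : ℕ → Euc n → ℝ}
    (hosc : GridOscBound τ m g) (hstep : GridStepBound τ m g) (hτ0 : 0 ≤ τ) (hτ1 : τ < 1)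
    (hg : ∀ l, Continuous (g l)) (hg0 : ∀ l, 0 ≤ g l) (hm : ∀ j, 1 ≤ j → 0 < m j)
    (hdiv : ∀ j, 1 ≤ j → m j ∣ m (j + 1)) {j l : ℕ} (hjl : j ≤ l) {E : Set (Euc n)} {δ : ℝ}
    (hδ0 : 0 ≤ δ) (hδ : ∀ x ∈ E, g j x ≤ δ) :
    ∫ x in closedUnitCube n ∩ thickening (m (j + 1) : ℝ)⁻¹ (gridHull (m (j + 1)) E), g l x ≤
      δ + 2 * τ ^ (j + 1) + τ ^ (j + 1) / (1 - τ) := by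
  classical
  set M := m (j + 1)
  have hM : 0 < M := hm _ le_add_self
  set near : Finset (Fin n → Fin M) := Finset.univ.filter fun w => ∃ z : Fin n → Fin M,
    (gridCube M (fun i => z i) ∩ E).Nonempty ∧
      (gridCube M (fun i => w i) ∩ gridCube M fun i => z i).Nonempty
  have hcover : closedUnitCube n ∩ thickening (M : ℝ)⁻¹ (gridHull M E) ⊆
      ⋃ w ∈ near, gridCube M fun i => w i := by
    rintro x ⟨hxQ, hx⟩
    obtain ⟨y, hy, hxy⟩ := mem_thickening_iff.1 hx
    obtain ⟨z, hzE, hyz⟩ := mem_iUnion₂.1 hy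
    obtain ⟨w, hxw⟩ := mem_iUnion.1 ((closedUnitCube_eq_iUnion hM).subset hxQ)
    exact mem_iUnion₂.2 ⟨w, Finset.mem_filter.2 ⟨Finset.mem_univ _, z, hzE,
      gridCube_inter_nonempty_of_dist_lt hxw hyz hxy⟩, hxw⟩
  have hint : ∀ w : Fin n → Fin M, IntegrableOn (g l) (gridCube M fun i => w i) :=
    fun w => (hg l).continuousOn.integrableOn_compact (isCompact_gridCube _ _)
  calc _ ≤ ∫ x in ⋃ w ∈ near, gridCube M fun i => w i, g l x :=
        setIntegral_mono_set (integrableOn_finset_iUnion.2 fun w _ => hint w)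
          (.of_forall (hg0 l)) hcover.eventuallyLE
    _ ≤ ∑ w ∈ near, ∫ x in gridCube M fun i => w i, g l x :=
        setIntegral_biUnion_le_sum near (hg0 l) fun w _ => hint w
    _ ≤ _ := sum_le_of_forall_le_mul_inv_pow hM near (by positivity) fun w hw => by
        obtain ⟨z, ⟨x₀, hx₀z, hx₀E⟩, hwz⟩ := (Finset.mem_filter.1 hw).2
        refine (setIntegral_gridCube_le_of_inter_nonempty hosc hstep hτ0 hτ1 hg hg0 hm hdiv hjl
          hwz hx₀z).trans ?_
        gcongr
        exact hδ x₀ hx₀E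

theorem exists_measure_le_and_volume_compl_le {τ : ℝ} (hτ : τ ∈ Ioo (0 : ℝ) 1) {m : ℕ → ℕ}
    (hm : ∀ j, 1 ≤ j → 0 < m j) (hdiv : ∀ j, 1 ≤ j → m j ∣ m (j + 1)) {g : ℕ → Euc n → ℝ}
    (hg : ∀ l, Continuous (g l)) (hg0 : ∀ l, 0 ≤ g l) (hstep : GridStepBound τ m g)
    (hosc : GridOscBound τ m g)
    (hae : ∀ᵐ x ∂(volume.restrict (closedUnitCube n)), Tendsto (fun j => g j x) atTop (𝓝 0))
    {μ : Measure (Euc n)} [IsFiniteMeasure μ] (hμQ : μ (closedUnitCube n)ᶜ = 0)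
    (hμlim : ∀ φ : Euc n → ℝ, ContinuousOn φ (closedUnitCube n) →
      Tendsto (fun j => ∫ x in closedUnitCube n, g j x * φ x) atTop
        (𝓝 (∫ x in closedUnitCube n, φ x ∂μ)))
    {ε : ℝ} (hε : 0 < ε) :
    ∃ s, MeasurableSet s ∧ μ s ≤ ENNReal.ofReal ε ∧
      volume.restrict (closedUnitCube n) sᶜ ≤ ENNReal.ofReal ε := by
  obtain ⟨hτ0, hτ1⟩ := hτ
  have hQ : MeasurableSet (closedUnitCube n) := isCompact_closedUnitCube.isClosed.measurableSet
  obtain ⟨t, -, -, htε, hunif⟩ := tendstoUniformlyOn_of_ae_tendsto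
    (fun l => (hg l).stronglyMeasurable) stronglyMeasurable_const hQ
    (by simp [volume_closedUnitCube]) ((ae_restrict_iff' hQ).1 hae) hε
  have hτlim : Tendsto (fun j => τ ^ (j + 1) / (1 - τ)) atTop (𝓝 0) := by
    simpa using ((tendsto_pow_atTop_nhds_zero_of_lt_one hτ0.le hτ1).comp
      (tendsto_add_atTop_nat 1)).div_const (1 - τ)
  obtain ⟨j, hjE, hjτ⟩ := ((Metric.tendstoUniformlyOn_iff.1 hunif (ε / 2) (by positivity)).and
    (hτlim.eventually (gt_mem_nhds (by positivity : (0 : ℝ) < ε / 6)))).exists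
  have hM : 0 < m (j + 1) := hm _ le_add_self
  have hκ : ε / 2 + 2 * τ ^ (j + 1) + τ ^ (j + 1) / (1 - τ) ≤ ε := by
    have := le_div_self (pow_nonneg hτ0.le (j + 1)) (sub_pos.2 hτ1) (by linarith)
    linarith
  refine ⟨gridHull (m (j + 1)) (closedUnitCube n \ t), measurableSet_gridHull _ _, ?_, ?_⟩
  · refine (measure_le_of_tendsto_setIntegral_mul hμQ hg0
      (fun l => (hg l).continuousOn.integrableOn_compact isCompact_closedUnitCube) hμlim
      (r := (m (j + 1) : ℝ)⁻¹) (by positivity) ?_).trans (ENNReal.ofReal_le_ofReal hκ)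
    filter_upwards [eventually_ge_atTop j] with l hl
    refine setIntegral_inter_thickening_gridHull_le hosc hstep hτ0.le hτ1 hg hg0 hm hdiv hl
      (δ := ε / 2) (by positivity) fun x hx => ?_
    have := hjE x hx
    rw [dist_zero_left, Real.norm_of_nonneg (hg0 j x)] at this
    exact this.le
  · rw [Measure.restrict_apply' hQ]
    refine (measure_mono (t := t) fun x hx => ?_).trans htε
    obtain ⟨hxG, hxQ⟩ := hx
    by_contra hxt
    exact hxG (inter_closedUnitCube_subset_gridHull hM _ ⟨⟨hxQ, hxt⟩, hxQ⟩)

end Construction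

theorem limit_hessian_measure_is_singular_general
    (n k : ℕ) (τ : ℝ) (hτ : τ ∈ Set.Ioo (0:ℝ) 1)
    (m : ℕ → ℕ) (hm : ∀ j : ℕ, 1 ≤ j → 2 ^ j ≤ m j) (hdiv : ∀ j : ℕ, 1 ≤ j → m j ∣ m (j+1))
    (f : ℕ → Euc n → ℝ) (hf : ∀ j, ContDiff ℝ 2 (f j))
    (hstep : ∀ j : ℕ, 1 ≤ j → ∀ z : Fin n → ℕ, (∀ i, z i < m j) →
      |∫ x in gridCube (m j) z, (Ck k (hess (f j) x) - Ck k (hess (f (j-1)) x))| ≤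
        τ ^ j * (volume (gridCube (m j) z)).toReal)
    (hosc : ∀ j : ℕ, 1 ≤ j → ∀ z : Fin n → ℕ, (∀ i, z i < m j) →
      ∀ x ∈ gridCube (m j) z, ∀ y ∈ gridCube (m j) z,
        |Ck k (hess (f (j-1)) y) - Ck k (hess (f (j-1)) x)| ≤ τ ^ j)
    (hae : ∀ᵐ x ∂(volume.restrict (closedUnitCube n)),
      Tendsto (fun j => Ck k (hess (f j) x)) atTop (𝓝 0))
    (μ : Measure (Euc n)) (hμfin : IsFiniteMeasure μ) (hμsupp : μ (closedUnitCube n)ᶜ = 0)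
    (hμlim : ∀ φ : Euc n → ℝ, ContinuousOn φ (closedUnitCube n) →
      Tendsto (fun j => ∫ x in closedUnitCube n, Ck k (hess (f j) x) * φ x) atTop
        (𝓝 (∫ x in closedUnitCube n, φ x ∂μ))) :
    Measure.MutuallySingular μ (volume.restrict (closedUnitCube n)) := by
  have hm_pos : ∀ j, 1 ≤ j → 0 < m j := fun j hj => (Nat.two_pow_pos j).trans_le (hm j hj)
  have hg : ∀ l, Continuous fun x => Ck k (hess (f l) x) :=
    fun l => (continuous_Ck k).comp (continuous_hess (hf l))
  exact Measure.mutuallySingular_of_forall_exists_le fun ε hε =>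
    exists_measure_le_and_volume_compl_le hτ hm_pos hdiv hg (fun l x => Ck_nonneg k _) hstep hosc
      hae hμsupp hμlim hε

/-- (Singularity of the limit measure.) With `τ ∈ (0,1)`, `m_j ≥ 2^j`,
`m_j ∣ m_{j+1}`, the cube-wise estimates (i), the oscillation estimates (ii), and
`C_k(∇²f_j) → 0` a.e. on `Q₀`, the weak-* limit measure `μ` of `C_k(∇²f_j) dx` is singular
with respect to Lebesgue measure on `Q₀`. -/
theorem limit_hessian_measure_is_singular
    (n k : ℕ) (hk1 : 1 ≤ k) (hkn : k ≤ n) (τ : ℝ) (hτ : τ ∈ Set.Ioo (0:ℝ) 1)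
    (m : ℕ → ℕ) (hm : ∀ j : ℕ, 1 ≤ j → 2 ^ j ≤ m j) (hdiv : ∀ j : ℕ, 1 ≤ j → m j ∣ m (j+1))
    (f : ℕ → Euc n → ℝ) (hf : ∀ j, ContDiff ℝ 2 (f j))
    (hstep : ∀ j : ℕ, 1 ≤ j → ∀ z : Fin n → ℕ, (∀ i, z i < m j) →
      |∫ x in gridCube (m j) z, (Ck k (hess (f j) x) - Ck k (hess (f (j-1)) x))| ≤
        τ ^ j * (volume (gridCube (m j) z)).toReal)
    (hosc : ∀ j : ℕ, 1 ≤ j → ∀ z : Fin n → ℕ, (∀ i, z i < m j) →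
      ∀ x ∈ gridCube (m j) z, ∀ y ∈ gridCube (m j) z,
        |Ck k (hess (f (j-1)) y) - Ck k (hess (f (j-1)) x)| ≤ τ ^ j)
    (hae : ∀ᵐ x ∂(volume.restrict (closedUnitCube n)),
      Tendsto (fun j => Ck k (hess (f j) x)) atTop (𝓝 0))
    (μ : Measure (Euc n)) (hμfin : IsFiniteMeasure μ) (hμsupp : μ (closedUnitCube n)ᶜ = 0)
    (hμlim : ∀ φ : Euc n → ℝ, ContinuousOn φ (closedUnitCube n) →
      Tendsto (fun j => ∫ x in closedUnitCube n, Ck k (hess (f j) x) * φ x) atTop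
        (𝓝 (∫ x in closedUnitCube n, φ x ∂μ))) :
    Measure.MutuallySingular μ (volume.restrict (closedUnitCube n)) :=
  limit_hessian_measure_is_singular_general n k τ hτ m hm hdiv f hf hstep hosc hae μ hμfin hμsupp
    hμlim
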